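/- For all a, b ∈ ℝ: ∫_ℝ Φ(az + b)²·φ(z) dz = Φ(b/√(1 + a²)) − 2·T(b/√(1 + a²), 1/√(1 + 2a²)). -/

import Mathlib

/-!
Both sides tend to `0` as `b → -∞`, so it suffices to show that they have the same derivative
in `b`. Differentiating under the integral, the left side has derivative
`2 E[Φ(aZ + b) φ(aZ + b)]`. Completing the square, `φ(az + b) φ(z) = φ(b/s) φ(sz + ab/s)` with
`s = √(1 + a²)`, so after an affine substitution this is `(2/s) φ(b/s) E[Φ((a/s)Z + b/s²)]`.
The same derivative argument gives `E[Φ(cZ + d)] = Φ(d/√(1 + c²))`, so the derivative equals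
`(2/s) φ(b/s) Φ(b/(s√(1 + 2a²)))`. On the right, `∂T/∂β (β, ϑ) = -φ(β) (Φ(βϑ) - 1/2)`,
and the chain rule produces the same expression.
-/

open MeasureTheory

/-- The standard normal density. -/
noncomputable def gaussPDF (z : ℝ) : ℝ := (Real.sqrt (2 * Real.pi))⁻¹ * Real.exp (-z ^ 2 / 2)

/-- The standard normal cumulative distribution function. -/
noncomputable def gaussCDF (x : ℝ) : ℝ := ∫ z in Set.Iic x, gaussPDF z

/-- Owen's T function. -/
noncomputable def owenT (β ϑ : ℝ) : ℝ := gaussPDF β * ∫ x in (0 : ℝ)..ϑ, gaussPDF (β * x) / (1 + x ^ 2)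

open Real Filter Topology ProbabilityTheory

lemma gaussPDF_eq_gaussianPDFReal : gaussPDF = gaussianPDFReal 0 1 := by
  ext z
  simp [gaussPDF, gaussianPDFReal]

lemma gaussPDF_nonneg (z : ℝ) : 0 ≤ gaussPDF z := by
  unfold gaussPDF; positivity

lemma gaussPDF_le (z : ℝ) : gaussPDF z ≤ (√(2 * π))⁻¹ := by
  unfold gaussPDF
  refine mul_le_of_le_one_right (by positivity) (Real.exp_le_one_iff.2 ?_)
  nlinarith [sq_nonneg z]

lemma abs_gaussPDF_le (x : ℝ) : |gaussPDF x| ≤ (√(2 * π))⁻¹ := by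
  rw [abs_of_nonneg (gaussPDF_nonneg x)]; exact gaussPDF_le x

lemma gaussPDF_neg (z : ℝ) : gaussPDF (-z) = gaussPDF z := by
  simp [gaussPDF]

@[fun_prop]
lemma continuous_gaussPDF : Continuous gaussPDF := by
  unfold gaussPDF; fun_prop

lemma integrable_gaussPDF : Integrable gaussPDF := by
  simpa [gaussPDF_eq_gaussianPDFReal] using integrable_gaussianPDFReal 0 1

lemma integral_gaussPDF : ∫ z, gaussPDF z = 1 := by
  simpa [gaussPDF_eq_gaussianPDFReal] using integral_gaussianPDFReal_eq_one 0 one_ne_zero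

lemma hasDerivAt_gaussPDF (z : ℝ) : HasDerivAt gaussPDF (-z * gaussPDF z) z := by
  have h : HasDerivAt (fun y : ℝ => -y ^ 2 / 2) (-z) z :=
    ((hasDerivAt_pow 2 z).neg.div_const 2).congr_deriv (by ring)
  exact (h.exp.const_mul (√(2 * π))⁻¹).congr_deriv (by simp only [gaussPDF]; ring)

lemma tendsto_gaussPDF_atBot : Tendsto gaussPDF atBot (𝓝 0) := by
  have h : Tendsto (fun z : ℝ => -z ^ 2 / 2) atBot atBot :=
    (tendsto_neg_atTop_atBot.comp (tendsto_pow_atTop two_ne_zero |>.comp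
      tendsto_abs_atBot_atTop)).atBot_div_const two_pos |>.congr fun z => by simp
  have := (Real.tendsto_exp_atBot.comp h).const_mul (√(2 * π))⁻¹
  rwa [mul_zero] at this

lemma gaussCDF_eq_cdf : gaussCDF = cdf (gaussianReal 0 1) := by
  ext x
  rw [cdf_eq_real, measureReal_def, gaussianReal_apply_eq_integral _ one_ne_zero,
    ENNReal.toReal_ofReal (setIntegral_nonneg measurableSet_Iic
      fun z _ => gaussianPDFReal_nonneg 0 1 z), ← gaussPDF_eq_gaussianPDFReal, gaussCDF]

lemma gaussCDF_nonneg (x : ℝ) : 0 ≤ gaussCDF x := gaussCDF_eq_cdf ▸ cdf_nonneg _ x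

lemma gaussCDF_le_one (x : ℝ) : gaussCDF x ≤ 1 := gaussCDF_eq_cdf ▸ cdf_le_one _ x

lemma abs_gaussCDF_le_one (x : ℝ) : |gaussCDF x| ≤ 1 := by
  rw [abs_of_nonneg (gaussCDF_nonneg x)]; exact gaussCDF_le_one x

lemma tendsto_gaussCDF_atBot : Tendsto gaussCDF atBot (𝓝 0) :=
  gaussCDF_eq_cdf ▸ tendsto_cdf_atBot _

lemma gaussCDF_sub_gaussCDF (u v : ℝ) :
    gaussCDF v - gaussCDF u = ∫ t in u..v, gaussPDF t :=
  intervalIntegral.integral_Iic_sub_Iic integrable_gaussPDF.integrableOn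
    integrable_gaussPDF.integrableOn

lemma hasDerivAt_gaussCDF (x : ℝ) : HasDerivAt gaussCDF (gaussPDF x) x := by
  have h := intervalIntegral.integral_hasDerivAt_right
    (integrable_gaussPDF.intervalIntegrable (a := 0) (b := x))
    (continuous_gaussPDF.stronglyMeasurableAtFilter _ _) continuous_gaussPDF.continuousAt
  refine (h.const_add (gaussCDF 0)).congr_of_eventuallyEq (Eventually.of_forall fun y => ?_)
  simp only [← gaussCDF_sub_gaussCDF, add_sub_cancel]

@[fun_prop]
lemma continuous_gaussCDF : Continuous gaussCDF :=
  continuous_iff_continuousAt.2 fun x => (hasDerivAt_gaussCDF x).continuousAt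

lemma gaussCDF_zero : gaussCDF 0 = 1 / 2 := by
  have hsplit : gaussCDF 0 + ∫ z in Set.Ioi 0, gaussPDF z = 1 :=
    integral_gaussPDF ▸ intervalIntegral.integral_Iic_add_Ioi integrable_gaussPDF.integrableOn
      integrable_gaussPDF.integrableOn
  have hsymm : ∫ z in Set.Ioi 0, gaussPDF z = gaussCDF 0 := by
    simpa [gaussPDF_neg, gaussCDF] using integral_comp_neg_Ioi 0 gaussPDF
  linarith

lemma eq_of_hasDerivAt_of_tendsto_atBot {f g f' : ℝ → ℝ} (hf : ∀ x, HasDerivAt f (f' x) x)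
    (hg : ∀ x, HasDerivAt g (f' x) x) (hf0 : Tendsto f atBot (𝓝 0))
    (hg0 : Tendsto g atBot (𝓝 0)) : f = g := by
  have hderiv (x : ℝ) : HasDerivAt (fun y => f y - g y) 0 x :=
    ((hf x).sub (hg x)).congr_deriv (sub_self _)
  have hconst (x y : ℝ) : f y - g y = f x - g x :=
    is_const_of_deriv_eq_zero (fun z => (hderiv z).differentiableAt) (fun z => (hderiv z).deriv) y x
  funext x
  have hlim : Tendsto (fun y => f y - g y) atBot (𝓝 (f x - g x)) :=
    tendsto_const_nhds.congr fun y => (hconst x y).symm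
  linarith [tendsto_nhds_unique hlim (by simpa using hf0.sub hg0)]

section GaussianSmoothing

variable {g g' : ℝ → ℝ} {C C' : ℝ}

lemma integrable_comp_affine_mul_gaussPDF (hg : Continuous g) (hC : ∀ x, |g x| ≤ C)
    (c d : ℝ) : Integrable fun u => g (c * u + d) * gaussPDF u :=
  integrable_gaussPDF.bdd_mul (hg.comp (by fun_prop)).aestronglyMeasurable
    (ae_of_all _ fun _ => hC _)

lemma hasDerivAt_integral_comp_affine_mul_gaussPDF (hg : ∀ x, HasDerivAt g (g' x) x)
    (hg' : Continuous g') (hC : ∀ x, |g x| ≤ C) (hC' : ∀ x, |g' x| ≤ C') (c d : ℝ) :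
    HasDerivAt (fun d => ∫ u, g (c * u + d) * gaussPDF u)
      (∫ u, g' (c * u + d) * gaussPDF u) d := by
  have hgc : Continuous g := continuous_iff_continuousAt.2 fun x => (hg x).continuousAt
  refine (hasDerivAt_integral_of_dominated_loc_of_deriv_le (Metric.ball_mem_nhds d one_pos)
    (Eventually.of_forall fun d => (integrable_comp_affine_mul_gaussPDF hgc hC c d).1)
    (integrable_comp_affine_mul_gaussPDF hgc hC c d)
    (integrable_comp_affine_mul_gaussPDF hg' hC' c d).1
    (F' := fun d u => g' (c * u + d) * gaussPDF u) (bound := fun u => C' * gaussPDF u)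
    (ae_of_all _ fun u x _ => ?_)
    (integrable_gaussPDF.const_mul C')
    (ae_of_all _ fun u x _ => ?_)).2
  · rw [norm_mul, Real.norm_of_nonneg (gaussPDF_nonneg u)]
    exact mul_le_mul_of_nonneg_right (hC' _) (gaussPDF_nonneg u)
  · exact ((hg _).comp x ((hasDerivAt_id x).const_add _)).mul_const _ |>.congr_deriv (by simp)

lemma tendsto_integral_comp_affine_mul_gaussPDF_atBot (hg : Continuous g)
    (hC : ∀ x, |g x| ≤ C) (hg0 : Tendsto g atBot (𝓝 0)) (c : ℝ) :
    Tendsto (fun d => ∫ u, g (c * u + d) * gaussPDF u) atBot (𝓝 0) := by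
  have h := tendsto_integral_filter_of_dominated_convergence (fun u => C * gaussPDF u)
    (Eventually.of_forall fun d => (integrable_comp_affine_mul_gaussPDF hg hC c d).1)
    (Eventually.of_forall fun d => ae_of_all _ fun u => ?_)
    (integrable_gaussPDF.const_mul C)
    (ae_of_all _ fun u => ((hg0.comp (tendsto_atBot_add_const_left _ (c * u) tendsto_id)).mul_const
      (gaussPDF u)))
  · simpa using h
  · rw [norm_mul, Real.norm_of_nonneg (gaussPDF_nonneg u)]
    exact mul_le_mul_of_nonneg_right (hC _) (gaussPDF_nonneg u)

end GaussianSmoothing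

lemma gaussPDF_affine_mul_gaussPDF (c d z : ℝ) :
    gaussPDF (c * z + d) * gaussPDF z
      = gaussPDF (d / √(1 + c ^ 2)) * gaussPDF (√(1 + c ^ 2) * z + c * d / √(1 + c ^ 2)) := by
  have hs : √(1 + c ^ 2) ^ 2 = 1 + c ^ 2 := Real.sq_sqrt (by positivity)
  have hs0 : √(1 + c ^ 2) ≠ 0 := by positivity
  simp only [gaussPDF, mul_mul_mul_comm _ (Real.exp _), ← Real.exp_add]
  congr 2
  field_simp
  rw [hs]
  ring

lemma integral_mul_gaussPDF_affine_mul_gaussPDF (f : ℝ → ℝ) (c d : ℝ) :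
    ∫ z, f z * (gaussPDF (c * z + d) * gaussPDF z)
      = gaussPDF (d / √(1 + c ^ 2)) / √(1 + c ^ 2)
        * ∫ u, f ((u - c * d / √(1 + c ^ 2)) / √(1 + c ^ 2)) * gaussPDF u := by
  set s := √(1 + c ^ 2)
  have hs : 0 < s := by positivity
  set h : ℝ → ℝ := fun u => f ((u - c * d / s) / s) * gaussPDF u
  have hcomp (z : ℝ) : f z * (gaussPDF (c * z + d) * gaussPDF z)
      = gaussPDF (d / s) * h (s * z + c * d / s) := by
    simp only [h, gaussPDF_affine_mul_gaussPDF c d z, add_sub_cancel_right,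
      mul_div_cancel_left₀ _ hs.ne']
    ring
  simp only [hcomp, integral_const_mul]
  rw [show ∫ z, h (s * z + c * d / s) = ∫ z, (fun y => h (y + c * d / s)) (s * z) from rfl,
    Measure.integral_comp_mul_left (fun y => h (y + c * d / s)) s, integral_add_right_eq_self,
    abs_inv, abs_of_pos hs, smul_eq_mul]
  ring

lemma integral_gaussPDF_affine_mul_gaussPDF (c d : ℝ) :
    ∫ u, gaussPDF (c * u + d) * gaussPDF u = gaussPDF (d / √(1 + c ^ 2)) / √(1 + c ^ 2) := by
  simpa [integral_gaussPDF] using integral_mul_gaussPDF_affine_mul_gaussPDF (fun _ => 1) c d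

lemma integral_gaussCDF_affine_mul_gaussPDF (c d : ℝ) :
    ∫ u, gaussCDF (c * u + d) * gaussPDF u = gaussCDF (d / √(1 + c ^ 2)) := by
  have hs : 0 < √(1 + c ^ 2) := by positivity
  refine congrFun (eq_of_hasDerivAt_of_tendsto_atBot (g := fun d => gaussCDF (d / √(1 + c ^ 2)))
    (f' := fun d => gaussPDF (d / √(1 + c ^ 2)) / √(1 + c ^ 2)) (fun d => ?_) (fun d => ?_)
    (tendsto_integral_comp_affine_mul_gaussPDF_atBot continuous_gaussCDF abs_gaussCDF_le_one
      tendsto_gaussCDF_atBot c)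
    (tendsto_gaussCDF_atBot.comp (tendsto_id.atBot_div_const hs))) d
  · rw [← integral_gaussPDF_affine_mul_gaussPDF]
    exact hasDerivAt_integral_comp_affine_mul_gaussPDF hasDerivAt_gaussCDF continuous_gaussPDF
      abs_gaussCDF_le_one abs_gaussPDF_le c d
  · exact ((hasDerivAt_gaussCDF _).comp d ((hasDerivAt_id d).div_const _)).congr_deriv
      (by simp [div_eq_mul_inv])

lemma integral_gaussCDF_mul_gaussPDF_affine_mul_gaussPDF (a b : ℝ) :
    ∫ z, gaussCDF (a * z + b) * (gaussPDF (a * z + b) * gaussPDF z)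
      = gaussPDF (b / √(1 + a ^ 2)) / √(1 + a ^ 2)
        * gaussCDF (b / (√(1 + a ^ 2) * √(1 + 2 * a ^ 2))) := by
  rw [integral_mul_gaussPDF_affine_mul_gaussPDF]
  set s := √(1 + a ^ 2)
  have hs : 0 < s := by positivity
  have hs2 : s ^ 2 = 1 + a ^ 2 := Real.sq_sqrt (by positivity)
  have hsubst (u : ℝ) : a * ((u - a * b / s) / s) + b = a / s * u + b / s ^ 2 := by
    field_simp
    linear_combination b * hs2
  have hroot : √(1 + (a / s) ^ 2) = √(1 + 2 * a ^ 2) / s := by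
    rw [← Real.sqrt_sq hs.le, ← Real.sqrt_div (by positivity), Real.sqrt_sq hs.le]
    congr 1
    field_simp
    linear_combination hs2
  simp only [hsubst, integral_gaussCDF_affine_mul_gaussPDF, hroot]
  congr 2
  field_simp

lemma mul_intervalIntegral_gaussPDF_mul (β θ : ℝ) :
    β * ∫ x in (0 : ℝ)..θ, gaussPDF (β * x) = gaussCDF (β * θ) - 1 / 2 := by
  rcases eq_or_ne β 0 with rfl | hβ
  · simp [gaussCDF_zero]
  · rw [intervalIntegral.integral_comp_mul_left gaussPDF hβ, mul_zero, smul_eq_mul,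
      ← mul_assoc, mul_inv_cancel₀ hβ, one_mul, ← gaussCDF_sub_gaussCDF, gaussCDF_zero]

lemma owenT_eq_intervalIntegral (β θ : ℝ) :
    owenT β θ = ∫ x in (0 : ℝ)..θ, gaussPDF β * gaussPDF (β * x) / (1 + x ^ 2) := by
  simp only [owenT, mul_div_assoc, intervalIntegral.integral_const_mul]

lemma hasDerivAt_owenT (θ β : ℝ) :
    HasDerivAt (fun β => owenT β θ) (-gaussPDF β * (gaussCDF (β * θ) - 1 / 2)) β := by
  -- `φ(β) φ(βx)` is a multiple of `exp (-β² (1 + x²) / 2)`, so its `β`-derivative cancels `1 + x²`.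
  have hF (β' x : ℝ) : HasDerivAt (fun β => gaussPDF β * gaussPDF (β * x) / (1 + x ^ 2))
      (-β' * (gaussPDF β' * gaussPDF (β' * x))) β' := by
    have h := (hasDerivAt_gaussPDF β').mul
      ((hasDerivAt_gaussPDF (β' * x)).comp β' ((hasDerivAt_id β').mul_const x))
    refine (h.div_const (1 + x ^ 2)).congr_deriv ?_
    simp only [Function.comp, id]
    field_simp
    ring
  have hbound (x β' : ℝ) (hβ' : β' ∈ Metric.ball β 1) :
      ‖-β' * (gaussPDF β' * gaussPDF (β' * x))‖ ≤ (|β| + 1) * ((√(2 * π))⁻¹ * (√(2 * π))⁻¹) := by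
    have hβ'_le : |β'| ≤ |β| + 1 := by
      have := abs_sub_abs_le_abs_sub β' β
      rw [Metric.mem_ball, Real.dist_eq] at hβ'
      linarith
    rw [norm_mul, norm_mul, norm_neg, Real.norm_eq_abs, Real.norm_eq_abs, Real.norm_eq_abs]
    gcongr <;> exact abs_gaussPDF_le _
  have hcont (β' : ℝ) : Continuous fun x => gaussPDF β' * gaussPDF (β' * x) / (1 + x ^ 2) :=
    (by fun_prop : Continuous fun x => gaussPDF β' * gaussPDF (β' * x)).div (by fun_prop)
      fun x => by positivity
  have hI := intervalIntegral.hasDerivAt_integral_of_dominated_loc_of_deriv_le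
    (μ := volume) (a := 0) (b := θ) (Metric.ball_mem_nhds β one_pos)
    (Eventually.of_forall fun β' => (hcont β').aestronglyMeasurable.restrict)
    ((hcont β).intervalIntegrable 0 θ)
    ((by fun_prop : Continuous fun x => -β * (gaussPDF β * gaussPDF (β * x)))
      |>.aestronglyMeasurable.restrict)
    (ae_of_all _ fun x _ => hbound x) intervalIntegrable_const
    (ae_of_all _ fun x _ β' _ => hF β' x)
  simp only [owenT_eq_intervalIntegral]
  refine hI.2.congr_deriv ?_
  rw [intervalIntegral.integral_const_mul, intervalIntegral.integral_const_mul,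
    ← mul_intervalIntegral_gaussPDF_mul]
  ring

lemma tendsto_owenT_atBot (θ : ℝ) : Tendsto (fun β => owenT β θ) atBot (𝓝 0) := by
  have hbound (β : ℝ) : ‖owenT β θ‖ ≤ gaussPDF β * ((√(2 * π))⁻¹ * |θ - 0|) := by
    rw [owenT, norm_mul, Real.norm_of_nonneg (gaussPDF_nonneg β)]
    refine mul_le_mul_of_nonneg_left (intervalIntegral.norm_integral_le_of_norm_le_const
      fun x _ => ?_) (gaussPDF_nonneg β)
    rw [Real.norm_of_nonneg (by positivity [gaussPDF_nonneg (β * x)])]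
    exact (div_le_self (gaussPDF_nonneg _) (by nlinarith [sq_nonneg x])).trans (gaussPDF_le _)
  simpa using squeeze_zero_norm hbound (by simpa using tendsto_gaussPDF_atBot.mul_const _)

/-- Identity (4.25): `E[Φ(aZ + b)²] = Φ(b/√(1+a²)) − 2T(b/√(1+a²), 1/√(1+2a²))` for a
standard normal `Z`, where `T` is Owen's T function. -/
theorem stmt_13 (a b : ℝ) :
    (∫ z : ℝ, (gaussCDF (a * z + b)) ^ 2 * gaussPDF z)
      = gaussCDF (b / Real.sqrt (1 + a ^ 2))
        - 2 * owenT (b / Real.sqrt (1 + a ^ 2)) (1 / Real.sqrt (1 + 2 * a ^ 2)) := by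
  set s := √(1 + a ^ 2)
  set t := √(1 + 2 * a ^ 2)
  have hs : 0 < s := by positivity
  have habs_sq (x : ℝ) : |gaussCDF x ^ 2| ≤ 1 := by
    rw [abs_pow]; exact pow_le_one₀ (abs_nonneg _) (abs_gaussCDF_le_one x)
  have habs_deriv (x : ℝ) : |2 * (gaussCDF x * gaussPDF x)| ≤ 2 * (1 * (√(2 * π))⁻¹) := by
    rw [abs_mul, abs_mul, abs_two]
    gcongr
    exacts [abs_gaussCDF_le_one x, abs_gaussPDF_le x]
  have hdiv (b : ℝ) : HasDerivAt (fun b => b / s) (1 / s) b := (hasDerivAt_id' b).div_const s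
  refine congrFun (eq_of_hasDerivAt_of_tendsto_atBot
    (f := fun b => ∫ z, gaussCDF (a * z + b) ^ 2 * gaussPDF z)
    (g := fun b => gaussCDF (b / s) - 2 * owenT (b / s) (1 / t))
    (f' := fun b => 2 * (gaussPDF (b / s) / s * gaussCDF (b / (s * t))))
    (fun b => ?_) (fun b => ?_) ?_ ?_) b
  · have h := hasDerivAt_integral_comp_affine_mul_gaussPDF (g := fun x => gaussCDF x ^ 2)
      (fun x => ((hasDerivAt_gaussCDF x).pow 2).congr_deriv (by ring)) (by fun_prop)
      habs_sq habs_deriv a b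
    simpa only [mul_assoc, integral_const_mul,
      integral_gaussCDF_mul_gaussPDF_affine_mul_gaussPDF] using h
  · refine ((hasDerivAt_gaussCDF _).comp b (hdiv b) |>.sub
      (((hasDerivAt_owenT _ _).comp b (hdiv b)).const_mul 2)).congr_deriv ?_
    rw [show b / s * (1 / t) = b / (s * t) by ring]
    ring
  · exact tendsto_integral_comp_affine_mul_gaussPDF_atBot (by fun_prop) habs_sq
      (by simpa using tendsto_gaussCDF_atBot.pow 2) a
  · have h := tendsto_id.atBot_div_const hs
    simpa using (tendsto_gaussCDF_atBot.comp h).sub (((tendsto_owenT_atBot _).comp h).const_mul 2)
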